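/- arXiv:1009.0473 — 2 statements merged into one kernel-verified Lean document; each statement's English description precedes it below -/
import Mathlib

section
/- Let σ be a symmetric positive definite d×d matrix and u a symmetric matrix. Then I + σu is invertible if and only if I + √σ u √σ is nondegenerate, and {u ∈ S_d : I + √σ u √σ positive definite} = -σ⁻¹ + S_d^{++}. -/
open Matrix

/-- The square root of a positive semidefinite matrix, as `Matrix.PosSemidef.sqrt` was defined
in Mathlib of December 2024 (it has since been removed). -/
noncomputable def Matrix.PosSemidef.sqrt {n : Type*} [Fintype n] [DecidableEq n]
    {A : Matrix n n ℝ} (hA : A.PosSemidef) : Matrix n n ℝ :=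
  (hA.1.eigenvectorUnitary : Matrix n n ℝ) * diagonal ((↑) ∘ (Real.sqrt ∘ hA.1.eigenvalues)) *
    (star (hA.1.eigenvectorUnitary : Matrix n n ℝ))

lemma Matrix.PosSemidef.sqrt_mul_self {n : Type*} [Fintype n] [DecidableEq n]
    {A : Matrix n n ℝ} (hA : A.PosSemidef) : hA.sqrt * hA.sqrt = A := by
  have hU : star (hA.1.eigenvectorUnitary : Matrix n n ℝ) * (hA.1.eigenvectorUnitary : Matrix n n ℝ) = 1 :=
    Unitary.coe_star_mul_self _
  have hD : diagonal ((↑) ∘ (Real.sqrt ∘ hA.1.eigenvalues)) * diagonal ((↑) ∘ (Real.sqrt ∘ hA.1.eigenvalues))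
      = diagonal (RCLike.ofReal ∘ hA.1.eigenvalues : n → ℝ) := by
    rw [diagonal_mul_diagonal]
    congr 1
    funext i
    simp [Real.mul_self_sqrt (hA.eigenvalues_nonneg i)]
  conv_rhs => rw [hA.1.spectral_theorem, Unitary.conjStarAlgAut_apply]
  unfold Matrix.PosSemidef.sqrt
  rw [← hD]
  calc _ = (hA.1.eigenvectorUnitary : Matrix n n ℝ) * diagonal ((↑) ∘ (Real.sqrt ∘ hA.1.eigenvalues)) *
      (star (hA.1.eigenvectorUnitary : Matrix n n ℝ) * (hA.1.eigenvectorUnitary : Matrix n n ℝ)) *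
      diagonal ((↑) ∘ (Real.sqrt ∘ hA.1.eigenvalues)) * (star (hA.1.eigenvectorUnitary : Matrix n n ℝ)) := by
        simp only [Matrix.mul_assoc]
    _ = _ := by rw [hU, Matrix.mul_one]; simp only [Matrix.mul_assoc]

lemma Matrix.PosSemidef.posSemidef_sqrt {n : Type*} [Fintype n] [DecidableEq n]
    {A : Matrix n n ℝ} (hA : A.PosSemidef) : hA.sqrt.PosSemidef := by
  unfold Matrix.PosSemidef.sqrt
  rw [star_eq_conjTranspose]
  apply PosSemidef.mul_mul_conjTranspose_same
  rw [posSemidef_diagonal_iff]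
  intro i
  simp [Real.sqrt_nonneg]

lemma herm_iff_symm {d : ℕ} {M : Matrix (Fin d) (Fin d) ℝ} : M.IsHermitian ↔ M.IsSymm := by
  rw [Matrix.IsHermitian, Matrix.IsSymm, conjTranspose_eq_transpose_of_trivial]

set_option maxHeartbeats 1000000 in
lemma aux_conj {d : ℕ} {A B : Matrix (Fin d) (Fin d) ℝ} (hA : A.PosDef) (hB : IsUnit B) :
    (Bᵀ * A * B).PosDef := by
  refine PosDef.of_dotProduct_mulVec_pos ?_ ?_
  · have := isHermitian_conjTranspose_mul_mul B hA.1
    simpa using this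
  · rw [posDef_iff_dotProduct_mulVec] at hA
    intro x hx
    have hBx : B *ᵥ x ≠ 0 := fun h =>
      hx ((Matrix.mulVec_injective_iff_isUnit.mpr hB).eq_iff' (by simp) |>.mp h)
    have := hA.2 (x := B *ᵥ x) hBx
    simpa only [star_mulVec, dotProduct_mulVec, vecMul_vecMul, conjTranspose_eq_transpose_of_trivial] using this

set_option maxHeartbeats 1000000 in
theorem stmt_2 {d : ℕ} (σ : Matrix (Fin d) (Fin d) ℝ) (hσ : σ.PosDef) :
    (∀ u : Matrix (Fin d) (Fin d) ℝ, u.IsSymm →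
      (IsUnit (1 + σ * u) ↔ IsUnit (1 + hσ.posSemidef.sqrt * u * hσ.posSemidef.sqrt))) ∧
    {u : Matrix (Fin d) (Fin d) ℝ | u.IsSymm ∧
        (1 + hσ.posSemidef.sqrt * u * hσ.posSemidef.sqrt).PosDef} =
      {u : Matrix (Fin d) (Fin d) ℝ | ∃ w : Matrix (Fin d) (Fin d) ℝ,
        w.IsSymm ∧ w.PosDef ∧ u = -σ⁻¹ + w} := by
  generalize hs_def : hσ.posSemidef.sqrt = s
  have hss : s * s = σ := by rw [← hs_def]; exact hσ.posSemidef.sqrt_mul_self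
  have hsherm : s.IsHermitian := by rw [← hs_def]; exact hσ.posSemidef.posSemidef_sqrt.isHermitian
  have hdet : s.det * s.det = σ.det := by rw [← det_mul, hss]
  have hdets : s.det ≠ 0 := by
    intro h
    have := hσ.det_pos
    rw [← hdet, h, mul_zero] at this
    exact lt_irrefl 0 this
  have hsu : IsUnit s := (isUnit_iff_isUnit_det s).mpr hdets.isUnit
  have hsinv : s * s⁻¹ = 1 := mul_nonsing_inv s hdets.isUnit
  have hinvs : s⁻¹ * s = 1 := nonsing_inv_mul s hdets.isUnit
  have hsymm_s : s.IsSymm := herm_iff_symm.mp hsherm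
  have hσinv : s⁻¹ * s⁻¹ = σ⁻¹ := by rw [← Matrix.mul_inv_rev, hss]
  constructor
  · intro u _
    have key : s * (1 + s * u * s) * s⁻¹ = 1 + σ * u := by
      rw [mul_add, mul_one, add_mul, hsinv, ← hss]
      congr 1
      calc s * (s * u * s) * s⁻¹ = s * s * u * (s * s⁻¹) := by noncomm_ring
        _ = s * s * u := by rw [hsinv, mul_one]
    rw [isUnit_iff_isUnit_det, isUnit_iff_isUnit_det, ← key, det_mul, det_mul,
      det_nonsing_inv, Ring.inverse_eq_inv]
    rw [mul_comm s.det, mul_assoc, mul_inv_cancel₀ hdets, mul_one]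
  · ext u
    simp only [Set.mem_setOf_eq]
    constructor
    · rintro ⟨hu, hP⟩
      refine ⟨σ⁻¹ + u, ?_, ?_, by abel⟩
      · exact herm_iff_symm.mp (hσ.isHermitian.inv.add (herm_iff_symm.mpr hu))
      · have h1 : (s⁻¹)ᵀ * (1 + s * u * s) * s⁻¹ = σ⁻¹ + u := by
          have htinv : (s⁻¹)ᵀ = s⁻¹ := by rw [transpose_nonsing_inv, hsymm_s.eq]
          rw [htinv, mul_add, mul_one, add_mul, hσinv]
          congr 1
          calc s⁻¹ * (s * u * s) * s⁻¹ = (s⁻¹ * s) * u * (s * s⁻¹) := by noncomm_ring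
            _ = u := by rw [hinvs, hsinv, one_mul, mul_one]
        rw [← h1]
        exact aux_conj hP (isUnit_nonsing_inv_iff.mpr hsu)
    · rintro ⟨w, hw, hwpd, rfl⟩
      constructor
      · exact herm_iff_symm.mp ((hσ.isHermitian.inv.neg).add (herm_iff_symm.mpr hw))
      · have h2 : 1 + s * (-σ⁻¹ + w) * s = sᵀ * w * s := by
          rw [hsymm_s.eq]
          have : s * σ⁻¹ * s = 1 := by
            rw [← hσinv]
            calc s * (s⁻¹ * s⁻¹) * s = (s * s⁻¹) * (s⁻¹ * s) := by noncomm_ring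
              _ = 1 := by rw [hsinv, hinvs, mul_one]
          calc 1 + s * (-σ⁻¹ + w) * s = 1 - s * σ⁻¹ * s + s * w * s := by noncomm_ring
            _ = s * w * s := by rw [this, sub_self, zero_add]
        rw [h2]
        exact aux_conj hwpd hsu
end

section
/- Let β ∈ M_d(ℝ), α ∈ S_d^+, and define σ_t(α) := 2∫₀ᵗ e^{βs} α e^{βᵀ s} ds. Then for u ∈ S_d^{++}, the function ψ(t,u) := e^{βᵀ t}(u⁻¹ + σ_t(α))⁻¹ e^{β t} satisfies the matrix Riccati differential equation ∂ψ/∂t = -2ψ α ψ + ψβ + βᵀψ with ψ(0,u) = u. -/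
/-!
Write `E(t) = e^{βt}` and `g(t) = u⁻¹ + σ_t(α)`, so that `ψ(t) = E(t)ᵀ g(t)⁻¹ E(t)` and, by the
fundamental theorem of calculus, `g' = 2 E α Eᵀ`. The product rule together with
`(g⁻¹)' = -g⁻¹ g' g⁻¹` gives `ψ' = βᵀ ψ + ψ β - 2 ψ α ψ` wherever `g(t)` is invertible; for
`t ≥ 0` it is, because `σ_t(α)` is an integral of the positive semidefinite matrices
`E α Eᵀ` and `u⁻¹` is positive definite.
-/

open Matrix MeasureTheory

attribute [local instance] Matrix.normedAddCommGroup Matrix.normedSpace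

/-- `σ_t(α) = 2 ∫₀ᵗ e^{β s} α e^{βᵀ s} ds`. -/
noncomputable def sigmaFlow {d : ℕ} (β α : Matrix (Fin d) (Fin d) ℝ) (t : ℝ) :
    Matrix (Fin d) (Fin d) ℝ :=
  (2 : ℝ) • ∫ s in (0 : ℝ)..t,
    NormedSpace.exp (s • β) * α * NormedSpace.exp (s • βᵀ)

/-- `ψ(t, u) = e^{βᵀ t} (u⁻¹ + σ_t(α))⁻¹ e^{β t}`. -/
noncomputable def riccatiPsi {d : ℕ} (β α : Matrix (Fin d) (Fin d) ℝ) (t : ℝ)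
    (u : Matrix (Fin d) (Fin d) ℝ) : Matrix (Fin d) (Fin d) ℝ :=
  NormedSpace.exp (t • βᵀ) * (u⁻¹ + sigmaFlow β α t)⁻¹ * NormedSpace.exp (t • β)

section NormedAlgebra

variable {𝕜 𝔸 : Type*} [NontriviallyNormedField 𝕜] [NormedRing 𝔸] [HasSummableGeomSeries 𝔸]
  [NormedAlgebra 𝕜 𝔸]

theorem HasDerivAt.ringInverse {g : 𝕜 → 𝔸} {g' : 𝔸} {t : 𝕜} (hg : HasDerivAt g g' t)
    (ht : IsUnit (g t)) :
    HasDerivAt (fun x => Ring.inverse (g x))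
      (-(Ring.inverse (g t) * g' * Ring.inverse (g t))) t := by
  obtain ⟨v, hv⟩ := ht
  have hinv := hasFDerivAt_ringInverse (𝕜 := 𝕜) v
  rw [hv] at hinv
  simpa [Function.comp_def, ← hv] using hinv.comp_hasDerivAt t hg

/-- `A g⁻¹ C` solves the Riccati equation `ψ' = -ψ a ψ + ψ q + p ψ` when `A' = p A`, `C' = C q`
and `g' = C a A`. -/
theorem HasDerivAt.mul_ringInverse_mul {A C g : 𝕜 → 𝔸} {p q a : 𝔸} {t : 𝕜}
    (hA : HasDerivAt A (p * A t) t) (hC : HasDerivAt C (C t * q) t)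
    (hg : HasDerivAt g (C t * a * A t) t) (ht : IsUnit (g t)) :
    HasDerivAt (fun x => A x * Ring.inverse (g x) * C x)
      (-(A t * Ring.inverse (g t) * C t * a * (A t * Ring.inverse (g t) * C t)) +
        A t * Ring.inverse (g t) * C t * q + p * (A t * Ring.inverse (g t) * C t)) t := by
  refine ((hA.mul (hg.ringInverse ht)).mul hC).congr_deriv ?_
  simp only [Pi.mul_apply]
  noncomm_ring

end NormedAlgebra

namespace Matrix

variable {n : Type*} [Fintype n]

theorem PosSemidef.intervalIntegral {f : ℝ → Matrix n n ℝ} {a b : ℝ} (hab : a ≤ b)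
    (hf : Continuous f) (hpos : ∀ s, (f s).PosSemidef) :
    (∫ s in a..b, f s).PosSemidef := by
  have hint := hf.intervalIntegrable (μ := volume) a b
  refine posSemidef_iff_dotProduct_mulVec.mpr ⟨?_, fun x => ?_⟩
  · let L := LinearMap.toContinuousLinearMap (conjTransposeLinearEquiv n n ℝ ℝ).toLinearMap
    calc (∫ s in a..b, f s)ᴴ = ∫ s in a..b, (f s)ᴴ := (L.intervalIntegral_comp_comm hint).symm
      _ = ∫ s in a..b, f s := intervalIntegral.integral_congr fun s _ => (hpos s).isHermitian.eq
  · let L : Matrix n n ℝ →L[ℝ] ℝ := LinearMap.toContinuousLinearMap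
      { toFun M := star x ⬝ᵥ M *ᵥ x
        map_add' M N := by simp only [add_mulVec, dotProduct_add]
        map_smul' c M := by simp only [smul_mulVec, dotProduct_smul, RingHom.id_apply] }
    calc 0 ≤ ∫ s in a..b, star x ⬝ᵥ f s *ᵥ x :=
          intervalIntegral.integral_nonneg_of_forall hab
            fun s => (hpos s).dotProduct_mulVec_nonneg x
      _ = star x ⬝ᵥ (∫ s in a..b, f s) *ᵥ x := L.intervalIntegral_comp_comm hint

theorem PosSemidef.exp_smul_mul_mul_exp_smul_transpose [DecidableEq n] {α : Matrix n n ℝ}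
    (hα : α.PosSemidef) (β : Matrix n n ℝ) (s : ℝ) :
    (NormedSpace.exp (s • β) * α * NormedSpace.exp (s • βᵀ)).PosSemidef := by
  simpa [← transpose_smul, exp_transpose] using
    hα.mul_mul_conjTranspose_same (NormedSpace.exp (s • β))

end Matrix

variable {d : ℕ}

section OperatorNorm

/- The calculus of `NormedSpace.exp` and of `Ring.inverse` needs a normed ring structure, which the
sup norm of the definitions above lacks. The `L∞` operator norm induces the same topology, and
`HasDerivAt` and `Continuous` depend only on the topology, so these results also hold for the sup
norm. Interval integrals must keep the sup norm of `sigmaFlow`, hence the switching back and forth. -/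
attribute [local instance] Matrix.linftyOpNormedAddCommGroup Matrix.linftyOpNormedSpace
  Matrix.linftyOpNormedRing Matrix.linftyOpNormedAlgebra

theorem Matrix.continuous_exp_smul {n : Type*} [Fintype n] [DecidableEq n] (A : Matrix n n ℝ) :
    Continuous fun s : ℝ => NormedSpace.exp (s • A) :=
  NormedSpace.exp_continuous.comp (continuous_id.smul continuous_const)

theorem continuous_sigmaFlow_integrand (β α : Matrix (Fin d) (Fin d) ℝ) :
    Continuous fun s : ℝ => NormedSpace.exp (s • β) * α * NormedSpace.exp (s • βᵀ) :=
  (β.continuous_exp_smul.mul continuous_const).mul βᵀ.continuous_exp_smul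

end OperatorNorm

theorem hasDerivAt_sigmaFlow (β α : Matrix (Fin d) (Fin d) ℝ) (t : ℝ) :
    HasDerivAt (sigmaFlow β α)
      ((2 : ℝ) • (NormedSpace.exp (t • β) * α * NormedSpace.exp (t • βᵀ))) t :=
  ((continuous_sigmaFlow_integrand β α).integral_hasStrictDerivAt 0 t).hasDerivAt.const_smul
    (2 : ℝ)

theorem sigmaFlow_posSemidef (β : Matrix (Fin d) (Fin d) ℝ) {α : Matrix (Fin d) (Fin d) ℝ}
    (hα : α.PosSemidef) {t : ℝ} (ht : 0 ≤ t) : (sigmaFlow β α t).PosSemidef :=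
  (PosSemidef.intervalIntegral ht (continuous_sigmaFlow_integrand β α)
    (hα.exp_smul_mul_mul_exp_smul_transpose β)).smul zero_le_two

section OperatorNorm

attribute [local instance] Matrix.linftyOpNormedAddCommGroup Matrix.linftyOpNormedSpace
  Matrix.linftyOpNormedRing Matrix.linftyOpNormedAlgebra

theorem hasDerivAt_riccatiPsi (β α u : Matrix (Fin d) (Fin d) ℝ) {t : ℝ}
    (ht : IsUnit (u⁻¹ + sigmaFlow β α t)) :
    HasDerivAt (fun s => riccatiPsi β α s u)
      (-(2 : ℝ) • (riccatiPsi β α t u * α * riccatiPsi β α t u) +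
        riccatiPsi β α t u * β + βᵀ * riccatiPsi β α t u) t := by
  have hg : HasDerivAt (fun s => u⁻¹ + sigmaFlow β α s)
      (NormedSpace.exp (t • β) * ((2 : ℝ) • α) * NormedSpace.exp (t • βᵀ)) t :=
    ((hasDerivAt_sigmaFlow β α t).const_add u⁻¹).congr_deriv
      (by simp only [mul_smul_comm, smul_mul_assoc])
  have hderiv := (hasDerivAt_exp_smul_const' βᵀ t).mul_ringInverse_mul
    (hasDerivAt_exp_smul_const β t) hg ht
  have hψ (s : ℝ) : riccatiPsi β α s u = NormedSpace.exp (s • βᵀ) *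
      Ring.inverse (u⁻¹ + sigmaFlow β α s) * NormedSpace.exp (s • β) := by
    rw [riccatiPsi, nonsing_inv_eq_ringInverse (u⁻¹ + sigmaFlow β α s)]
  simp only [hψ]
  refine hderiv.congr_deriv ?_
  simp only [mul_smul_comm, smul_mul_assoc, neg_smul]
  -- the two sides differ only in the instance paths of the two norms
  rfl

end OperatorNorm

theorem riccatiPsi_zero (β α : Matrix (Fin d) (Fin d) ℝ) {u : Matrix (Fin d) (Fin d) ℝ}
    (hu : IsUnit u) : riccatiPsi β α 0 u = u := by
  simp [riccatiPsi, sigmaFlow, nonsing_inv_nonsing_inv u ((isUnit_iff_isUnit_det u).mp hu)]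

theorem stmt_8 {d : ℕ} (β α u : Matrix (Fin d) (Fin d) ℝ)
    (hα : α.PosSemidef) (hu : u.PosDef) :
    riccatiPsi β α 0 u = u ∧
    ∀ t : ℝ, 0 ≤ t →
      HasDerivWithinAt (fun s => riccatiPsi β α s u)
        (-(2 : ℝ) • (riccatiPsi β α t u * α * riccatiPsi β α t u) +
          riccatiPsi β α t u * β + βᵀ * riccatiPsi β α t u)
        (Set.Ici 0) t := by
  refine ⟨riccatiPsi_zero β α hu.isUnit, fun t ht => ?_⟩
  have hg : (u⁻¹ + sigmaFlow β α t).PosDef := hu.inv.add_posSemidef (sigmaFlow_posSemidef β hα ht)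
  exact (hasDerivAt_riccatiPsi β α u hg.isUnit).hasDerivWithinAt
end
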